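/- Let M be a nonempty smooth manifold and let I be a proper ideal of R = C^∞(M,ℝ) with dim_ℝ(R/I) = d finite. Then spec(I) is a nonempty finite set with at most d elements. -/

import Mathlib

/-!
Evaluation at a point of `spec I` factors through `R ⧸ I`, so bump functions separating
finitely many points of `spec I` have linearly independent classes in `R ⧸ I`; hence
`spec I` has at most `d` points.

If `spec I` were empty, take a proper smooth function `h`. As `R ⧸ I` is finite-dimensional,
`p(h) ∈ I` for some monic `p`, and the zero set of `p(h)` is compact, lying in a sublevel
set of `h`. Adding `p(h)²` to the squares of finitely many elements of `I` that have no common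
zero on this compact set gives a nowhere vanishing, hence invertible, element of `I`.
-/

open scoped Manifold
open Module Filter Topology

noncomputable section

/-- The ℝ-algebra of smooth real-valued functions on a manifold `M` modelled on `ℝ^m`. -/
abbrev SmoothFns (m : ℕ) (M : Type*) [TopologicalSpace M]
    [ChartedSpace (EuclideanSpace ℝ (Fin m)) M] : Type _ :=
  C^(⊤ : ℕ∞)⟮𝓡 m, M; 𝓘(ℝ, ℝ), ℝ⟯

variable {m : ℕ} {M : Type*} [TopologicalSpace M] [T2Space M] [SecondCountableTopology M]
  [ChartedSpace (EuclideanSpace ℝ (Fin m)) M] [IsManifold (𝓡 m) (⊤ : ℕ∞) M]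

/-- The ideal `𝔪ₓ` of smooth functions vanishing at the point `x`. -/
def mIdeal (x : M) : Ideal (SmoothFns m M) where
  carrier := {f | f x = 0}
  add_mem' := by intro f g hf hg; simp_all
  zero_mem' := by simp
  smul_mem' := by intro c f hf; simp_all

/-- The ideal `𝔫ₓ` of smooth functions vanishing on some neighbourhood of the point `x`. -/
def nIdeal (x : M) : Ideal (SmoothFns m M) where
  carrier := {f | ∀ᶠ y in 𝓝 x, f y = 0}
  add_mem' := by
    intro f g hf hg
    filter_upwards [hf, hg] with y h1 h2
    simp [h1, h2]
  zero_mem' := by filter_upwards with y; simp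
  smul_mem' := by
    intro c f hf
    filter_upwards [hf] with y h
    simp [h]

/-- The spectrum of an ideal: the set of common zeros of its elements. -/
def idealSpec (I : Ideal (SmoothFns m M)) : Set M :=
  {x : M | ∀ f ∈ I, f x = 0}


open scoped ContDiff

theorem Set.finite_of_forall_finite_subset_ncard_le {α : Type*} {s : Set α} {k : ℕ}
    (h : ∀ t ⊆ s, t.Finite → t.ncard ≤ k) : s.Finite := by
  by_contra hs
  obtain ⟨t, hts, ht, htk⟩ := Set.Infinite.exists_subset_ncard_eq hs (k + 1)
  have := h t hts ht
  omega

namespace ContMDiffMap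

variable {E H N : Type*} [NormedAddCommGroup E] [NormedSpace ℝ E] [TopologicalSpace H]
  {J : ModelWithCorners ℝ E H} [TopologicalSpace N] [ChartedSpace H N]

section Algebraic

variable {n : WithTop ℕ∞}

theorem isUnit_of_forall_ne_zero (f : C^n⟮J, N; 𝓘(ℝ, ℝ), ℝ⟯) (hf : ∀ x, f x ≠ 0) :
    IsUnit f :=
  IsUnit.of_mul_eq_one ⟨fun x => (f x)⁻¹, f.contMDiff.inv₀ hf⟩ <| by
    ext x
    exact mul_inv_cancel₀ (hf x)

theorem aeval_apply (f : C^n⟮J, N; 𝓘(ℝ, ℝ), ℝ⟯) (p : Polynomial ℝ) (x : N) :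
    Polynomial.aeval f p x = p.eval (f x) := by
  rw [← coeFnAlgHom_apply, ← Polynomial.aeval_algHom_apply, Polynomial.aeval_fn_apply]
  rfl

theorem exists_mem_ideal_nonneg_pos_on_isCompact (I : Ideal C^n⟮J, N; 𝓘(ℝ, ℝ), ℝ⟯) {K : Set N}
    (hK : IsCompact K) (hKI : ∀ x ∈ K, ∃ f ∈ I, f x ≠ 0) :
    ∃ f ∈ I, (∀ x, 0 ≤ f x) ∧ ∀ x ∈ K, 0 < f x := by
  refine hK.induction_on (p := fun K => ∃ f ∈ I, (∀ x, 0 ≤ f x) ∧ ∀ x ∈ K, 0 < f x)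
    ⟨0, I.zero_mem, fun _ => le_rfl, fun _ h => h.elim⟩ ?_ ?_ ?_
  · rintro s t hst ⟨f, hfI, hf0, hfpos⟩
    exact ⟨f, hfI, hf0, fun x hx => hfpos x (hst hx)⟩
  · rintro s t ⟨f, hfI, hf0, hfpos⟩ ⟨g, hgI, hg0, hgpos⟩
    refine ⟨f + g, I.add_mem hfI hgI, fun x => add_nonneg (hf0 x) (hg0 x), ?_⟩
    rintro x (hx | hx)
    · exact add_pos_of_pos_of_nonneg (hfpos x hx) (hg0 x)
    · exact add_pos_of_nonneg_of_pos (hf0 x) (hgpos x hx)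
  · intro x hx
    obtain ⟨f, hfI, hfx⟩ := hKI x hx
    have hnhds : {y | f y ≠ 0} ∈ 𝓝 x :=
      (isOpen_ne_fun (ContMDiffMap.contMDiff f).continuous continuous_const).mem_nhds hfx
    exact ⟨_, mem_nhdsWithin_of_mem_nhds hnhds, f * f, I.mul_mem_left f hfI,
      fun y => mul_self_nonneg (f y), fun y hy => mul_self_pos.2 hy⟩

theorem _root_.Ideal.eq_top_of_isCompact_zeroSet {I : Ideal C^n⟮J, N; 𝓘(ℝ, ℝ), ℝ⟯}
    {g : C^n⟮J, N; 𝓘(ℝ, ℝ), ℝ⟯} (hgI : g ∈ I) (hg : IsCompact {x | g x = 0})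
    (hI : ∀ x, g x = 0 → ∃ f ∈ I, f x ≠ 0) : I = ⊤ := by
  obtain ⟨f, hfI, hf0, hfpos⟩ := exists_mem_ideal_nonneg_pos_on_isCompact I hg hI
  -- `g * g + f ∈ I` has no zero, since `f` is positive wherever `g` vanishes.
  refine I.eq_top_of_isUnit_mem (I.add_mem (I.mul_mem_left g hgI) hfI)
    (isUnit_of_forall_ne_zero _ fun x => ne_of_gt ?_)
  change 0 < g x * g x + f x
  by_cases hgx : g x = 0
  · simpa [hgx] using hfpos x hgx
  · exact add_pos_of_pos_of_nonneg (mul_self_pos.2 hgx) (hf0 x)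

end Algebraic

variable [FiniteDimensional ℝ E] [T2Space N] [SigmaCompactSpace N] [IsManifold J ∞ N]
  {n : ℕ∞}

theorem exists_isCompact_sublevel :
    ∃ h : C^n⟮J, N; 𝓘(ℝ, ℝ), ℝ⟯, ∀ c, IsCompact {x | h x ≤ c} := by
  have := Manifold.locallyCompact_of_finiteDimensional (M := N) J
  let K := CompactExhaustion.choice N
  obtain ⟨h, hh⟩ := exists_contMDiffMap_forall_mem_convex_of_local_const J (n := n)
    (t := fun x => Set.Ici (K.find x : ℝ)) (fun _ => convex_Ici _) fun x => by
      refine ⟨K.find x + 1, ?_⟩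
      filter_upwards [isOpen_interior.mem_nhds (K.subset_interior_succ _ (K.mem_find x))]
        with y hy
      exact Set.mem_Ici.2 (by exact_mod_cast K.mem_iff_find_le.1 (interior_subset hy))
  refine ⟨h, fun c => (K.isCompact ⌊c⌋₊).of_isClosed_subset
    (isClosed_le (ContMDiffMap.contMDiff h).continuous continuous_const) fun x hx => ?_⟩
  exact K.mem_iff_find_le.2 (Nat.le_floor ((hh x).trans hx))

theorem _root_.Ideal.exists_mem_isCompact_zeroSet (I : Ideal C^n⟮J, N; 𝓘(ℝ, ℝ), ℝ⟯)
    [FiniteDimensional ℝ (C^n⟮J, N; 𝓘(ℝ, ℝ), ℝ⟯ ⧸ I)] : ∃ g ∈ I, IsCompact {x | g x = 0} := by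
  obtain ⟨h, hh⟩ := exists_isCompact_sublevel (J := J) (N := N) (n := n)
  -- `h` is integral modulo `I`, and the zero set of its monic relation lies in a sublevel set.
  obtain ⟨p, hp, hpI⟩ := IsIntegral.of_finite ℝ (Ideal.Quotient.mkₐ ℝ I h)
  have hgI : Polynomial.aeval h p ∈ I := by
    rw [← Ideal.Quotient.eq_zero_iff_mem, ← Ideal.Quotient.mkₐ_eq_mk ℝ,
      ← Polynomial.aeval_algHom_apply]
    exact hpI
  obtain ⟨c, hc⟩ := p.exists_max_root hp.ne_zero
  refine ⟨_, hgI, (hh c).of_isClosed_subset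
    (isClosed_eq (ContMDiffMap.contMDiff _).continuous continuous_const) fun x hx => hc _ ?_⟩
  rwa [Set.mem_ofPred_eq, aeval_apply] at hx

theorem _root_.Ideal.ncard_le_finrank_quotient_of_forall_eq_zero
    (I : Ideal C^n⟮J, N; 𝓘(ℝ, ℝ), ℝ⟯) [FiniteDimensional ℝ (C^n⟮J, N; 𝓘(ℝ, ℝ), ℝ⟯ ⧸ I)]
    {t : Set N} (ht : t.Finite) (htI : ∀ f ∈ I, ∀ x ∈ t, f x = 0) :
    t.ncard ≤ finrank ℝ (C^n⟮J, N; 𝓘(ℝ, ℝ), ℝ⟯ ⧸ I) := by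
  have hbump : ∀ x ∈ t, ∃ g : C^n⟮J, N; 𝓘(ℝ, ℝ), ℝ⟯, g x = 1 ∧ Set.EqOn g 0 (t \ {x}) :=
    fun x _ => by
      obtain ⟨g, hg0, hg1, -⟩ := exists_contMDiffMap_zero_one_of_isClosed J (n := n)
        ht.sdiff.isClosed isClosed_singleton Set.disjoint_sdiff_left
      exact ⟨g, hg1 rfl, hg0⟩
  choose g hg1 hg0 using hbump
  have hli : LinearIndependent ℝ fun x : t => Ideal.Quotient.mkₐ ℝ I (g x x.2) := by
    refine linearIndependent_iff'.2 fun s c hc y hy => ?_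
    have hmem : ∑ x ∈ s, c x • g x x.2 ∈ I := by
      rw [← Ideal.Quotient.eq_zero_iff_mem, ← Ideal.Quotient.mkₐ_eq_mk ℝ, map_sum]
      simpa only [map_smul] using hc
    have hy0 := htI _ hmem y y.2
    rw [← coeFnAlgHom_apply, map_sum, Finset.sum_apply, Finset.sum_eq_single y] at hy0
    · simpa [hg1] using hy0
    · intro x _ hxy
      simp [hg0 x x.2 ⟨y.2, fun h => hxy (Subtype.ext h).symm⟩]
    · exact fun hy' => absurd hy hy'
  have := ht.fintype
  rw [← Nat.card_coe_set_eq, Nat.card_eq_fintype_card]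
  exact hli.fintype_card_le_finrank

end ContMDiffMap

theorem spec_nonempty_finite_card_le
    (I : Ideal (SmoothFns m M)) (hI : I ≠ ⊤) (d : ℕ)
    (hfd : FiniteDimensional ℝ (SmoothFns m M ⧸ I))
    (hd : Module.finrank ℝ (SmoothFns m M ⧸ I) = d) :
    (idealSpec I).Nonempty ∧ (idealSpec I).Finite ∧ (idealSpec I).ncard ≤ d := by
  have : LocallyCompactSpace M := Manifold.locallyCompact_of_finiteDimensional (𝓡 m)
  have hbound : ∀ t ⊆ idealSpec I, t.Finite → t.ncard ≤ d := fun t hts ht =>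
    hd ▸ I.ncard_le_finrank_quotient_of_forall_eq_zero ht fun f hf x hx => hts hx f hf
  have hfin := Set.finite_of_forall_finite_subset_ncard_le hbound
  refine ⟨?_, hfin, hbound _ subset_rfl hfin⟩
  obtain ⟨g, hgI, hg⟩ := I.exists_mem_isCompact_zeroSet
  by_contra hempty
  refine hI (Ideal.eq_top_of_isCompact_zeroSet hgI hg fun x _ => ?_)
  by_contra! hx
  exact hempty ⟨x, hx⟩
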